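/- For k matrices Z₁, ..., Z_k ∈ ℝ^{d×nᵢ} whose column spaces are pairwise orthogonal (ZᵢᵀZⱼ = 0 for i ≠ j), the nuclear norm of the full concatenation satisfies ‖[Z₁, ..., Z_k]‖_* = Σᵢ ‖Zᵢ‖_*. -/

import Mathlib

/-!
Write `W` for the concatenation. Then `W Wᴴ = ∑ᵢ Zᵢ Zᵢᴴ`, and orthogonality of the column spaces
makes the Gram matrices `Zᵢ Zᵢᴴ` multiply to zero pairwise. For positive semidefinite `A`, `B`
with `A B = 0` also `√A √B = 0`, so `(∑ᵢ √(Zᵢ Zᵢᴴ))² = W Wᴴ`, and uniqueness of the positive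
square root gives `√(W Wᴴ) = ∑ᵢ √(Zᵢ Zᵢᴴ)`. Taking traces proves the claim, since the nuclear
norm of `M` is `tr √(M Mᴴ)`.
-/

open Matrix

noncomputable def singularValues {d : ℕ} {n : Type*} [Fintype n]
    (M : Matrix (Fin d) n ℝ) : Fin d → ℝ :=
  fun i => Real.sqrt ((Matrix.isHermitian_mul_conjTranspose_self M).eigenvalues i)

noncomputable def nuclearNorm {d : ℕ} {n : Type*} [Fintype n]
    (M : Matrix (Fin d) n ℝ) : ℝ :=
  ∑ i, singularValues M i

noncomputable def matSpectralNorm {d : ℕ} {n : Type*} [Fintype n]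
    (M : Matrix (Fin d) n ℝ) : ℝ :=
  ⨆ i, singularValues M i

open scoped MatrixOrder ComplexOrder

namespace Matrix

section Concat

variable {m ι α : Type*} {n : ι → Type*}

def concatCols (Z : ∀ i, Matrix m (n i) α) : Matrix m (Σ i, n i) α :=
  of fun r p => Z p.1 r p.2

variable [Fintype ι] [∀ i, Fintype (n i)] [NonUnitalNonAssocSemiring α] [Star α]

theorem concatCols_mul_conjTranspose (Z : ∀ i, Matrix m (n i) α) :
    concatCols Z * (concatCols Z)ᴴ = ∑ i, Z i * (Z i)ᴴ := by
  ext r s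
  simp only [mul_apply, sum_apply, conjTranspose_apply, concatCols, of_apply]
  rw [← Finset.univ_sigma_univ, Finset.sum_sigma]

end Concat

theorem mul_conjTranspose_mul_mul_conjTranspose_eq_zero {m n p α : Type*} [Fintype m] [Fintype n]
    [Fintype p] [NonUnitalSemiring α] [StarRing α]
    {X : Matrix m n α} {Y : Matrix m p α} (h : Xᴴ * Y = 0) :
    X * Xᴴ * (Y * Yᴴ) = 0 := by
  rw [Matrix.mul_assoc, ← Matrix.mul_assoc Xᴴ, h, Matrix.zero_mul, Matrix.mul_zero]

variable {𝕜 m : Type*} [RCLike 𝕜] [Fintype m] [DecidableEq m]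

theorem IsHermitian.trace_cfc {A : Matrix m m 𝕜} (hA : A.IsHermitian) (f : ℝ → ℝ) :
    (cfc f A).trace = ∑ i, (f (hA.eigenvalues i) : 𝕜) := by
  rw [hA.cfc_eq, IsHermitian.cfc, Unitary.conjStarAlgAut_apply, trace_mul_cycle,
    Unitary.coe_star_mul_self, Matrix.one_mul, trace_diagonal]
  rfl

theorem PosSemidef.trace_sqrt {A : Matrix m m 𝕜} (hA : A.PosSemidef) :
    (CFC.sqrt A).trace = ∑ i, (√(hA.1.eigenvalues i) : 𝕜) := by
  rw [CFC.sqrt_eq_real_sqrt A hA.nonneg, cfcₙ_eq_cfc, hA.1.trace_cfc]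

theorem sqrt_mul_eq_zero_of_mul_eq_zero {A B : Matrix m m 𝕜} (hA : A.PosSemidef)
    (hB : B.PosSemidef) (h : A * B = 0) : CFC.sqrt A * B = 0 := by
  -- `(√A B)ᴴ (√A B) = B A B`
  rw [← conjTranspose_mul_self_eq_zero, conjTranspose_mul, hB.1.eq,
    (CFC.sqrt_nonneg A).posSemidef.1.eq, Matrix.mul_assoc, ← Matrix.mul_assoc (CFC.sqrt A),
    CFC.sqrt_mul_sqrt_self A hA.nonneg, h, Matrix.mul_zero]

theorem sqrt_mul_sqrt_eq_zero_of_mul_eq_zero {A B : Matrix m m 𝕜} (hA : A.PosSemidef)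
    (hB : B.PosSemidef) (h : A * B = 0) : CFC.sqrt A * CFC.sqrt B = 0 := by
  -- `(√A √B) (√A √B)ᴴ = √A B √A`
  rw [← self_mul_conjTranspose_eq_zero, conjTranspose_mul, (CFC.sqrt_nonneg A).posSemidef.1.eq,
    (CFC.sqrt_nonneg B).posSemidef.1.eq, Matrix.mul_assoc, ← Matrix.mul_assoc (CFC.sqrt B),
    CFC.sqrt_mul_sqrt_self B hB.nonneg, ← Matrix.mul_assoc, sqrt_mul_eq_zero_of_mul_eq_zero hA hB h,
    Matrix.zero_mul]

theorem sqrt_sum_of_pairwise_mul_eq_zero {ι : Type*} [Fintype ι] {A : ι → Matrix m m 𝕜}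
    (hA : ∀ i, (A i).PosSemidef) (h : Pairwise fun i j ↦ A i * A j = 0) :
    CFC.sqrt (∑ i, A i) = ∑ i, CFC.sqrt (A i) := by
  refine CFC.sqrt_unique ?_ (Finset.sum_nonneg fun i _ ↦ CFC.sqrt_nonneg (A i))
  rw [Finset.sum_mul_sum]
  refine Finset.sum_congr rfl fun i _ ↦ ?_
  rw [Finset.sum_eq_single i (fun j _ hji ↦ sqrt_mul_sqrt_eq_zero_of_mul_eq_zero (hA i) (hA j)
    (h hji.symm)) (by simp), CFC.sqrt_mul_sqrt_self _ (hA i).nonneg]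

end Matrix

theorem nuclearNorm_eq_trace_sqrt {d : ℕ} {n : Type*} [Fintype n] (M : Matrix (Fin d) n ℝ) :
    nuclearNorm M = (CFC.sqrt (M * Mᴴ)).trace :=
  ((posSemidef_self_mul_conjTranspose M).trace_sqrt).symm

theorem nuclearNorm_concat_eq_sum_of_pairwise_orthogonal
    {d k : ℕ} (n : Fin k → ℕ)
    (Z : ∀ i : Fin k, Matrix (Fin d) (Fin (n i)) ℝ)
    (horth : ∀ i j, i ≠ j → (Z i)ᵀ * Z j = 0) :
    nuclearNorm (Matrix.of fun r (p : Σ i : Fin k, Fin (n i)) => Z p.1 r p.2)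
      = ∑ i, nuclearNorm (Z i) := by
  have hgram : Pairwise fun i j ↦ Z i * (Z i)ᴴ * (Z j * (Z j)ᴴ) = 0 := fun i j hij ↦
    mul_conjTranspose_mul_mul_conjTranspose_eq_zero (horth i j hij)
  change nuclearNorm (concatCols Z) = _
  rw [nuclearNorm_eq_trace_sqrt, concatCols_mul_conjTranspose,
    sqrt_sum_of_pairwise_mul_eq_zero (fun i ↦ posSemidef_self_mul_conjTranspose (Z i)) hgram,
    trace_sum]
  simp only [nuclearNorm_eq_trace_sqrt]
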